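/- Let h be the binary entropy in base 2 and β ∈ [2√2, 4]. The function G(β) = 1 - h(1/2 + (1/2)√(β²/8 - 1)) is convex and monotonically increasing on [2√2, 4]. -/

import Mathlib

/-!
Write `G = F ∘ q` with `q β = β² / 8 - 1`, which is convex and increasing and maps `[2√2, 4]`
onto `[0, 1]`, and `F s = 1 - h (1/2 + √s / 2)` (`sqBiasBound`). On `(0, 1)`,
`F' s = L (√s) / √s / (4 log 2)` with `L t = log (1 + t) - log (1 - t) = 2 artanh t`. Since
`L' t = 2 / (1 - t²)` is increasing, `L` is convex on `[0, 1)` with `L 0 = 0`, so its secant slope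
`L t / t` is increasing and nonnegative. Hence `F` is convex and increasing on `[0, 1]`, and so is
its composite with the convex increasing `q`. (Factoring through `u = √(β² / 8 - 1)` instead
fails, since that map is concave.)
-/

noncomputable def binEnt (x : ℝ) : ℝ :=
  -x * Real.logb 2 x - (1 - x) * Real.logb 2 (1 - x)

noncomputable def mabkBound (β : ℝ) : ℝ :=
  1 - binEnt (1/2 + (1/2) * Real.sqrt (β^2/8 - 1))

open Real Set

lemma binEnt_eq_binEntropy_div_log_two (x : ℝ) : binEnt x = binEntropy x / log 2 := by
  simp only [binEnt, binEntropy, logb, log_inv]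
  ring

lemma continuous_binEnt : Continuous binEnt := by
  simp only [funext binEnt_eq_binEntropy_div_log_two]
  fun_prop

lemma convexOn_of_hasDerivAt_of_monotoneOn {D : Set ℝ} (hD : Convex ℝ D) {f f' : ℝ → ℝ}
    (hf : ContinuousOn f D) (hf' : ∀ x ∈ interior D, HasDerivAt f (f' x) x)
    (hf'_mono : MonotoneOn f' (interior D)) : ConvexOn ℝ D f :=
  MonotoneOn.convexOn_of_deriv hD hf
    (fun x hx ↦ (hf' x hx).differentiableAt.differentiableWithinAt)
    (hf'_mono.congr fun x hx ↦ (hf' x hx).deriv.symm)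

lemma hasDerivAt_log_one_add_sub_log_one_sub {t : ℝ} (ht : t ∈ Ioo (-1) 1) :
    HasDerivAt (fun t ↦ log (1 + t) - log (1 - t)) (2 / (1 - t ^ 2)) t := by
  obtain ⟨h₁, h₂⟩ := ht
  have h : HasDerivAt (fun t ↦ log (1 + t) - log (1 - t)) (1 / (1 + t) - -1 / (1 - t)) t :=
    (((hasDerivAt_id' t).const_add 1).log (by linarith)).sub
      (((hasDerivAt_id' t).const_sub 1).log (by linarith))
  convert h using 1
  field_simp [show 1 + t ≠ 0 by linarith, show 1 - t ≠ 0 by linarith,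
    show 1 - t ^ 2 ≠ 0 by nlinarith]
  ring

lemma convexOn_log_one_add_sub_log_one_sub :
    ConvexOn ℝ (Ico 0 1) (fun t ↦ log (1 + t) - log (1 - t)) := by
  refine convexOn_of_hasDerivAt_of_monotoneOn (f' := fun t ↦ 2 / (1 - t ^ 2)) (convex_Ico 0 1)
    (fun t ht ↦ (hasDerivAt_log_one_add_sub_log_one_sub ⟨by linarith [ht.1], ht.2⟩)
      |>.continuousAt.continuousWithinAt) ?_ ?_
  · rw [interior_Ico]
    exact fun t ht ↦ hasDerivAt_log_one_add_sub_log_one_sub ⟨by linarith [ht.1], ht.2⟩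
  · rw [interior_Ico]
    intro x hx y hy hxy
    have hy₂ : 0 < 1 - y ^ 2 := by nlinarith [hy.1, hy.2]
    dsimp only
    gcongr
    exact hx.1.le

lemma monotoneOn_log_one_add_sub_log_one_sub_div :
    MonotoneOn (fun t ↦ (log (1 + t) - log (1 - t)) / t) (Ioo 0 1) := by
  intro x hx y hy hxy
  simpa using convexOn_log_one_add_sub_log_one_sub.secant_mono (a := 0) ⟨le_rfl, one_pos⟩
    (Ioo_subset_Ico_self hx) (Ioo_subset_Ico_self hy) hx.1.ne' hy.1.ne' hxy

lemma hasDerivAt_one_sub_binEnt_half_add_half_mul {u : ℝ} (hu : u ∈ Ioo (-1) 1) :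
    HasDerivAt (fun u ↦ 1 - binEnt (1/2 + 1/2 * u))
      ((log (1 + u) - log (1 - u)) / (2 * log 2)) u := by
  obtain ⟨h₁, h₂⟩ := hu
  have hp : HasDerivAt (fun u ↦ binEntropy (1/2 + 1/2 * u))
      ((log (1 - (1/2 + 1/2 * u)) - log (1/2 + 1/2 * u)) * (1/2 * 1)) u :=
    (hasDerivAt_binEntropy (by linarith) (by linarith)).comp u
      (((hasDerivAt_id' u).const_mul (1/2)).const_add (1/2))
  have e₁ : log (1 - (1/2 + 1/2 * u)) = log (1 - u) - log 2 := by
    rw [← log_div (by linarith) two_ne_zero]; congr 1; ring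
  have e₂ : log (1/2 + 1/2 * u) = log (1 + u) - log 2 := by
    rw [← log_div (by linarith) two_ne_zero]; congr 1; ring
  simp only [binEnt_eq_binEntropy_div_log_two]
  refine ((hp.div_const (log 2)).const_sub 1).congr_deriv ?_
  rw [e₁, e₂]
  ring

noncomputable def sqBiasBound (s : ℝ) : ℝ := 1 - binEnt (1/2 + 1/2 * √s)

lemma mabkBound_eq_sqBiasBound_comp : mabkBound = sqBiasBound ∘ fun β ↦ β ^ 2 / 8 - 1 := rfl

lemma continuous_sqBiasBound : Continuous sqBiasBound :=
  continuous_const.sub (continuous_binEnt.comp (by fun_prop))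

lemma hasDerivAt_sqBiasBound {s : ℝ} (hs : s ∈ Ioo 0 1) :
    HasDerivAt sqBiasBound ((log (1 + √s) - log (1 - √s)) / √s / (4 * log 2)) s := by
  have hs₀ : 0 < √s := sqrt_pos.2 hs.1
  have hs₁ : √s < 1 := (sqrt_lt' one_pos).2 (by simpa using hs.2)
  refine ((hasDerivAt_one_sub_binEnt_half_add_half_mul ⟨by linarith, hs₁⟩).comp s
    (hasDerivAt_sqrt hs.1.ne')).congr_deriv ?_
  field_simp
  ring

lemma convexOn_sqBiasBound : ConvexOn ℝ (Icc 0 1) sqBiasBound := by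
  refine convexOn_of_hasDerivAt_of_monotoneOn (convex_Icc 0 1) continuous_sqBiasBound.continuousOn
    (by rw [interior_Icc]; exact fun s hs ↦ hasDerivAt_sqBiasBound hs) ?_
  rw [interior_Icc]
  intro x hx y hy hxy
  have hx₁ : √x < 1 := (sqrt_lt' one_pos).2 (by simpa using hx.2)
  have hy₁ : √y < 1 := (sqrt_lt' one_pos).2 (by simpa using hy.2)
  have hslope := monotoneOn_log_one_add_sub_log_one_sub_div ⟨sqrt_pos.2 hx.1, hx₁⟩
    ⟨sqrt_pos.2 hy.1, hy₁⟩ (sqrt_le_sqrt hxy)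
  exact div_le_div_of_nonneg_right hslope (by positivity [log_pos one_lt_two])

lemma monotoneOn_sqBiasBound : MonotoneOn sqBiasBound (Icc 0 1) := by
  refine monotoneOn_of_hasDerivWithinAt_nonneg (convex_Icc 0 1)
    continuous_sqBiasBound.continuousOn
    (by rw [interior_Icc]; exact fun s hs ↦ (hasDerivAt_sqBiasBound hs).hasDerivWithinAt) ?_
  rw [interior_Icc]
  intro s hs
  have hs₀ : 0 < √s := sqrt_pos.2 hs.1
  have hs₁ : √s < 1 := (sqrt_lt' one_pos).2 (by simpa using hs.2)
  have hL : 0 ≤ log (1 + √s) - log (1 - √s) :=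
    sub_nonneg.2 (log_le_log (by linarith) (by linarith))
  positivity [log_pos one_lt_two]

lemma convexOn_sq_div_eight_sub_one : ConvexOn ℝ univ (fun β : ℝ ↦ β ^ 2 / 8 - 1) := by
  refine (((even_two.convexOn_pow (𝕜 := ℝ)).smul (by norm_num : (0 : ℝ) ≤ 1 / 8)).add_const
    (-1)).congr fun β _ ↦ ?_
  simp only [Pi.add_apply, smul_eq_mul]
  ring

lemma monotoneOn_sq_div_eight_sub_one : MonotoneOn (fun β : ℝ ↦ β ^ 2 / 8 - 1) (Ici 0) :=
  fun x hx _ _ hxy ↦ by dsimp only; gcongr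

lemma image_sq_div_eight_sub_one_Icc :
    (fun β : ℝ ↦ β ^ 2 / 8 - 1) '' Icc (2 * √2) 4 = Icc 0 1 := by
  have h2 : √2 ^ 2 = 2 := sq_sqrt zero_le_two
  have hle : 2 * √2 ≤ 4 := by nlinarith [sqrt_nonneg 2]
  rw [ContinuousOn.image_Icc_of_monotoneOn hle (by fun_prop)
    (monotoneOn_sq_div_eight_sub_one.mono fun β hβ ↦ le_trans (by positivity) hβ.1)]
  norm_num [mul_pow, h2]

theorem mabkBound_convex_monotone :
    ConvexOn ℝ (Set.Icc (2 * Real.sqrt 2) 4) mabkBound ∧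
    MonotoneOn mabkBound (Set.Icc (2 * Real.sqrt 2) 4) := by
  have hmono : MonotoneOn (fun β : ℝ ↦ β ^ 2 / 8 - 1) (Icc (2 * √2) 4) :=
    monotoneOn_sq_div_eight_sub_one.mono fun β hβ ↦ le_trans (by positivity) hβ.1
  have himage := image_sq_div_eight_sub_one_Icc
  rw [mabkBound_eq_sqBiasBound_comp]
  constructor
  · exact (himage ▸ convexOn_sqBiasBound).comp
      (convexOn_sq_div_eight_sub_one.subset (subset_univ _) (convex_Icc _ _))
      (himage ▸ monotoneOn_sqBiasBound)
  · exact monotoneOn_sqBiasBound.comp hmono (himage ▸ mapsTo_image _ _)
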